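/- Let (A, μ, Δ, α, β, ψ, ω) be a λ-infinitesimal BiHom-bialgebra (structure maps not necessarily invertible). Define a⋆b = (β²ψ(b₁)·α(a))·α²βω(b₂). Then (A, ⋆, α²β, α²β²ψω) is a left BiHom-pre-Lie algebra. -/
import Mathlib

open TensorProduct

noncomputable section

variable (K : Type*) [Field K] (A : Type*) [AddCommGroup A] [Module K A]
variable (M : Type*) [AddCommGroup M] [Module K M]

/-- BiHom-associative algebra axioms for `(A, μ, α, β)`. -/
def BiHomAssoc (μ : A ⊗[K] A →ₗ[K] A) (α β : A →ₗ[K] A) : Prop :=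
  α ∘ₗ β = β ∘ₗ α ∧
  (∀ a b : A, α (μ (a ⊗ₜ[K] b)) = μ (α a ⊗ₜ[K] α b)) ∧
  (∀ a b : A, β (μ (a ⊗ₜ[K] b)) = μ (β a ⊗ₜ[K] β b)) ∧
  (∀ a b c : A, μ (α a ⊗ₜ[K] μ (b ⊗ₜ[K] c)) = μ (μ (a ⊗ₜ[K] b) ⊗ₜ[K] β c))

/-- BiHom-coassociative coalgebra axioms for `(A, Δ, ψ, ω)`. -/
def BiHomCoassoc (Δ : A →ₗ[K] A ⊗[K] A) (ψ ω : A →ₗ[K] A) : Prop :=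
  ψ ∘ₗ ω = ω ∘ₗ ψ ∧
  (TensorProduct.map ψ ψ ∘ₗ Δ = Δ ∘ₗ ψ) ∧
  (TensorProduct.map ω ω ∘ₗ Δ = Δ ∘ₗ ω) ∧
  ((TensorProduct.assoc K A A A).toLinearMap ∘ₗ TensorProduct.map Δ ψ ∘ₗ Δ
    = TensorProduct.map ω Δ ∘ₗ Δ)

/-- The compatibility condition of a `λ`-infinitesimal BiHom-bialgebra:
`Δ(ab) = ω(a)b₁ ⊗ β(b₂) + α(a₁) ⊗ a₂ψ(b) + λ (αω(a) ⊗ βψ(b))`. -/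
def InfBHCompat (lam : K) (μ : A ⊗[K] A →ₗ[K] A) (Δ : A →ₗ[K] A ⊗[K] A)
    (α β ψ ω : A →ₗ[K] A) : Prop :=
  ∀ a b : A, Δ (μ (a ⊗ₜ[K] b)) =
    TensorProduct.map μ β ((TensorProduct.assoc K A A A).symm (ω a ⊗ₜ[K] Δ b))
    + TensorProduct.map α μ ((TensorProduct.assoc K A A A) (Δ a ⊗ₜ[K] ψ b))
    + lam • (α (ω a) ⊗ₜ[K] β (ψ b))

/-- `λ`-infinitesimal BiHom-bialgebra. -/
def IsInfBH (lam : K) (μ : A ⊗[K] A →ₗ[K] A) (Δ : A →ₗ[K] A ⊗[K] A)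
    (α β ψ ω : A →ₗ[K] A) : Prop :=
  BiHomAssoc K A μ α β ∧ BiHomCoassoc K A Δ ψ ω ∧
  α ∘ₗ ψ = ψ ∘ₗ α ∧ α ∘ₗ ω = ω ∘ₗ α ∧ β ∘ₗ ψ = ψ ∘ₗ β ∧ β ∘ₗ ω = ω ∘ₗ β ∧
  (TensorProduct.map α α ∘ₗ Δ = Δ ∘ₗ α) ∧
  (TensorProduct.map β β ∘ₗ Δ = Δ ∘ₗ β) ∧
  (ψ ∘ₗ μ = μ ∘ₗ TensorProduct.map ψ ψ) ∧
  (ω ∘ₗ μ = μ ∘ₗ TensorProduct.map ω ω) ∧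
  InfBHCompat K A lam μ Δ α β ψ ω

/-- Unit axioms for a unitary `λ`-infBH-bialgebra (or unitary BiHom-algebra). -/
def IsUnitBH (μ : A ⊗[K] A →ₗ[K] A) (α β ψ ω : A →ₗ[K] A) (e : A) : Prop :=
  α e = e ∧ β e = e ∧ ψ e = e ∧ ω e = e ∧
  (∀ a : A, μ (a ⊗ₜ[K] e) = α a) ∧ (∀ a : A, μ (e ⊗ₜ[K] a) = β a)

/-- Counit axioms for a counitary `λ`-infBH-bialgebra. -/
def IsCounitBH (Δ : A →ₗ[K] A ⊗[K] A) (α β ψ ω : A →ₗ[K] A) (ε : A →ₗ[K] K) : Prop :=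
  ε ∘ₗ α = ε ∧ ε ∘ₗ β = ε ∧ ε ∘ₗ ψ = ε ∧ ε ∘ₗ ω = ε ∧
  ((TensorProduct.rid K A).toLinearMap ∘ₗ TensorProduct.map LinearMap.id ε ∘ₗ Δ = ω) ∧
  ((TensorProduct.lid K A).toLinearMap ∘ₗ TensorProduct.map ε LinearMap.id ∘ₗ Δ = ψ)

/-- Left BiHom-module axioms. -/
def IsLeftBiHomModule (μ : A ⊗[K] A →ₗ[K] A) (α β : A →ₗ[K] A)
    (γ : A ⊗[K] M →ₗ[K] M) (αM βM : M →ₗ[K] M) : Prop :=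
  αM ∘ₗ βM = βM ∘ₗ αM ∧
  (∀ (a : A) (m : M), αM (γ (a ⊗ₜ[K] m)) = γ (α a ⊗ₜ[K] αM m)) ∧
  (∀ (a : A) (m : M), βM (γ (a ⊗ₜ[K] m)) = γ (β a ⊗ₜ[K] βM m)) ∧
  (∀ (a a' : A) (m : M),
    γ (α a ⊗ₜ[K] γ (a' ⊗ₜ[K] m)) = γ (μ (a ⊗ₜ[K] a') ⊗ₜ[K] βM m))

/-- Left BiHom-comodule axioms. -/
def IsLeftBiHomComodule (Δ : A →ₗ[K] A ⊗[K] A) (ψ ω : A →ₗ[K] A)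
    (ρ : M →ₗ[K] A ⊗[K] M) (ψM ωM : M →ₗ[K] M) : Prop :=
  ψM ∘ₗ ωM = ωM ∘ₗ ψM ∧
  (TensorProduct.map ψ ψM ∘ₗ ρ = ρ ∘ₗ ψM) ∧
  (TensorProduct.map ω ωM ∘ₗ ρ = ρ ∘ₗ ωM) ∧
  ((TensorProduct.assoc K A A M).toLinearMap ∘ₗ TensorProduct.map Δ ψM ∘ₗ ρ
    = TensorProduct.map ω ρ ∘ₗ ρ)

/-- Left `λ`-infBH-Hopf module over a `λ`-infBH-bialgebra. -/
def IsInfBHHopfModule (lam : K) (μ : A ⊗[K] A →ₗ[K] A) (Δ : A →ₗ[K] A ⊗[K] A)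
    (α β ψ ω : A →ₗ[K] A) (γ : A ⊗[K] M →ₗ[K] M) (ρ : M →ₗ[K] A ⊗[K] M)
    (αM βM ψM ωM : M →ₗ[K] M) : Prop :=
  IsLeftBiHomModule K A M μ α β γ αM βM ∧
  IsLeftBiHomComodule K A M Δ ψ ω ρ ψM ωM ∧
  αM ∘ₗ ψM = ψM ∘ₗ αM ∧ αM ∘ₗ ωM = ωM ∘ₗ αM ∧
  βM ∘ₗ ψM = ψM ∘ₗ βM ∧ βM ∘ₗ ωM = ωM ∘ₗ βM ∧
  ∀ (a : A) (m : M), ρ (γ (a ⊗ₜ[K] m)) =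
    TensorProduct.map μ βM ((TensorProduct.assoc K A A M).symm (ω a ⊗ₜ[K] ρ m))
    + TensorProduct.map α γ ((TensorProduct.assoc K A A M) (Δ a ⊗ₜ[K] ψM m))
    + lam • (α (ω a) ⊗ₜ[K] βM (ψM m))

/-- `a ⋆ b = (β²ψ(b₁) · α(a)) · α²βω(b₂)`. -/
def Star18 (K : Type*) [Field K] (A : Type*) [AddCommGroup A] [Module K A]
    (μ : A ⊗[K] A →ₗ[K] A) (Δ : A →ₗ[K] A ⊗[K] A) (α β ψ ω : A →ₗ[K] A)
    (a b : A) : A :=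
  (μ ∘ₗ TensorProduct.map
      ((μ ∘ₗ ((TensorProduct.mk K A A).flip (α a))) ∘ₗ (β ∘ₗ β ∘ₗ ψ))
      (α ∘ₗ α ∘ₗ β ∘ₗ ω)) (Δ b)

section Aux18

variable {K : Type*} [Field K] {A : Type*} [AddCommGroup A] [Module K A]

/-- `Fm μ α β ψ x : y ↦ β²ψ(y)·α(x)`, the first slot map of the star product. -/
def Fm (μ : A ⊗[K] A →ₗ[K] A) (α β ψ : A →ₗ[K] A) (x : A) : A →ₗ[K] A :=
  (μ ∘ₗ ((TensorProduct.mk K A A).flip (α x))) ∘ₗ (β ∘ₗ β ∘ₗ ψ)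

/-- `Gm α β ω = α²βω`, the second slot map of the star product. -/
def Gm (α β ω : A →ₗ[K] A) : A →ₗ[K] A := α ∘ₗ α ∘ₗ β ∘ₗ ω

@[simp] lemma Fm_apply (μ : A ⊗[K] A →ₗ[K] A) (α β ψ : A →ₗ[K] A) (x y : A) :
    Fm μ α β ψ x y = μ (β (β (ψ y)) ⊗ₜ[K] α x) := rfl

@[simp] lemma Gm_apply (α β ω : A →ₗ[K] A) (y : A) :
    Gm α β ω y = α (α (β (ω y))) := rfl

/-- First piece of `Δ ∘ F(φ₁ b)`. -/
def XX1 (μ : A ⊗[K] A →ₗ[K] A) (Δ : A →ₗ[K] A ⊗[K] A) (α β ψ ω : A →ₗ[K] A) (b : A) :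
    A →ₗ[K] A ⊗[K] A :=
  TensorProduct.map μ β ∘ₗ (TensorProduct.assoc K A A A).symm.toLinearMap
    ∘ₗ ((TensorProduct.mk K A (A ⊗[K] A)).flip
        (TensorProduct.map α α (TensorProduct.map (α ∘ₗ α ∘ₗ β) (α ∘ₗ α ∘ₗ β) (Δ b))))
    ∘ₗ (β ∘ₗ β ∘ₗ ψ ∘ₗ ω)

@[simp] lemma XX1_apply (μ : A ⊗[K] A →ₗ[K] A) (Δ : A →ₗ[K] A ⊗[K] A)
    (α β ψ ω : A →ₗ[K] A) (b z : A) :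
    XX1 μ Δ α β ψ ω b z
      = TensorProduct.map μ β ((TensorProduct.assoc K A A A).symm
          (β (β (ψ (ω z))) ⊗ₜ[K]
            TensorProduct.map α α (TensorProduct.map (α ∘ₗ α ∘ₗ β) (α ∘ₗ α ∘ₗ β) (Δ b)))) := rfl

/-- Second piece of `Δ ∘ F(φ₁ b)` (to be composed with `Δ`). -/
def XX2 (μ : A ⊗[K] A →ₗ[K] A) (α β ψ : A →ₗ[K] A) (b : A) :
    A ⊗[K] A →ₗ[K] A ⊗[K] A :=
  TensorProduct.map α μ ∘ₗ (TensorProduct.assoc K A A A).toLinearMap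
    ∘ₗ ((TensorProduct.mk K (A ⊗[K] A) A).flip (ψ (α (α (α (β b))))))
    ∘ₗ TensorProduct.map (β ∘ₗ β ∘ₗ ψ) (β ∘ₗ β ∘ₗ ψ)

@[simp] lemma XX2_apply (μ : A ⊗[K] A →ₗ[K] A) (α β ψ : A →ₗ[K] A) (b : A)
    (t : A ⊗[K] A) :
    XX2 μ α β ψ b t
      = TensorProduct.map α μ ((TensorProduct.assoc K A A A)
          ((TensorProduct.map (β ∘ₗ β ∘ₗ ψ) (β ∘ₗ β ∘ₗ ψ) t) ⊗ₜ[K] ψ (α (α (α (β b)))))) := rfl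

/-- Third piece of `Δ ∘ F(φ₁ b)`. -/
def XX3 (α β ψ ω : A →ₗ[K] A) (lam : K) (b : A) : A →ₗ[K] A ⊗[K] A :=
  lam • (((TensorProduct.mk K A A).flip (β (ψ (α (α (α (β b)))))))
    ∘ₗ (α ∘ₗ ω ∘ₗ β ∘ₗ β ∘ₗ ψ))

@[simp] lemma XX3_apply (α β ψ ω : A →ₗ[K] A) (lam : K) (b z : A) :
    XX3 α β ψ ω lam b z
      = lam • (α (ω (β (β (ψ z)))) ⊗ₜ[K] β (ψ (α (α (α (β b)))))) := rfl

end Aux18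
/-- a `λ`-infBH-bialgebra gives a left BiHom-pre-Lie algebra
`(A, ⋆, α²β, α²β²ψω)` (structure maps not necessarily invertible). -/
theorem biHomPreLie_of_infBH
    (K : Type*) [Field K] (A : Type*) [AddCommGroup A] [Module K A]
    (lam : K) (μ : A ⊗[K] A →ₗ[K] A) (Δ : A →ₗ[K] A ⊗[K] A) (α β ψ ω : A →ₗ[K] A)
    (hbi : IsInfBH K A lam μ Δ α β ψ ω) :
    let s := Star18 K A μ Δ α β ψ ω
    let φ₁ : A →ₗ[K] A := α ∘ₗ α ∘ₗ β
    let φ₂ : A →ₗ[K] A := α ∘ₗ α ∘ₗ β ∘ₗ β ∘ₗ ψ ∘ₗ ω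
    (φ₁ ∘ₗ φ₂ = φ₂ ∘ₗ φ₁) ∧
    (∀ a b : A, φ₁ (s a b) = s (φ₁ a) (φ₁ b)) ∧
    (∀ a b : A, φ₂ (s a b) = s (φ₂ a) (φ₂ b)) ∧
    (∀ a b c : A,
      s (φ₁ (φ₂ a)) (s (φ₁ b) c) - s (s (φ₂ a) (φ₁ b)) (φ₂ c)
      = s (φ₁ (φ₂ b)) (s (φ₁ a) c) - s (s (φ₂ b) (φ₁ a)) (φ₂ c)) := by
  intro s φ₁ φ₂
  obtain ⟨⟨hαβ, hαμ, hβμ, hassoc⟩, ⟨hψω, hψΔ, hωΔ, hcoassoc⟩,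
    hαψ, hαω, hβψ, hβω, hαΔ, hβΔ, hψμC, hωμC, hcompat⟩ := hbi
  -- pointwise commutations, oriented to pull `α`, then `β`, then `ψ` outwards
  have hba : ∀ x, β (α x) = α (β x) := fun x => LinearMap.congr_fun hαβ.symm x
  have hpa : ∀ x, ψ (α x) = α (ψ x) := fun x => LinearMap.congr_fun hαψ.symm x
  have hoa : ∀ x, ω (α x) = α (ω x) := fun x => LinearMap.congr_fun hαω.symm x
  have hpb : ∀ x, ψ (β x) = β (ψ x) := fun x => LinearMap.congr_fun hβψ.symm x
  have hob : ∀ x, ω (β x) = β (ω x) := fun x => LinearMap.congr_fun hβω.symm x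
  have hop : ∀ x, ω (ψ x) = ψ (ω x) := fun x => LinearMap.congr_fun hψω.symm x
  have hψμ : ∀ x y, ψ (μ (x ⊗ₜ[K] y)) = μ (ψ x ⊗ₜ[K] ψ y) := fun x y => by
    simpa using LinearMap.congr_fun hψμC (x ⊗ₜ[K] y)
  have hωμ : ∀ x y, ω (μ (x ⊗ₜ[K] y)) = μ (ω x ⊗ₜ[K] ω y) := fun x y => by
    simpa using LinearMap.congr_fun hωμC (x ⊗ₜ[K] y)
  have hΔα : ∀ x, Δ (α x) = map α α (Δ x) := fun x => (LinearMap.congr_fun hαΔ x).symm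
  have hΔβ : ∀ x, Δ (β x) = map β β (Δ x) := fun x => (LinearMap.congr_fun hβΔ x).symm
  have hΔψ : ∀ x, Δ (ψ x) = map ψ ψ (Δ x) := fun x => (LinearMap.congr_fun hψΔ x).symm
  have hΔω : ∀ x, Δ (ω x) = map ω ω (Δ x) := fun x => (LinearMap.congr_fun hωΔ x).symm
  have mm : ∀ (f g h k : A →ₗ[K] A) (t : A ⊗[K] A),
      map f g (map h k t) = map (f ∘ₗ h) (g ∘ₗ k) t := fun f g h k t => by
    rw [TensorProduct.map_comp]; rfl
  have hco' : ∀ x, map Δ ψ (Δ x)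
      = (TensorProduct.assoc K A A A).symm (map ω Δ (Δ x)) := by
    intro x
    have h := LinearMap.congr_fun hcoassoc x
    simp only [LinearMap.comp_apply, LinearEquiv.coe_coe] at h
    exact (LinearEquiv.eq_symm_apply _).mpr h
  have hΔφ₁ : ∀ z, Δ (φ₁ z) = map φ₁ φ₁ (Δ z) := fun z => by
    simp only [φ₁, LinearMap.comp_apply, hΔα, hΔβ, mm]
  have hΔφ₂ : ∀ z, Δ (φ₂ z) = map φ₂ φ₂ (Δ z) := fun z => by
    simp only [φ₂, LinearMap.comp_apply, hΔα, hΔβ, hΔψ, hΔω, mm]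
  have star_unfold : ∀ u v, Star18 K A μ Δ α β ψ ω u v
      = μ (map (Fm μ α β ψ u) (Gm α β ω) (Δ v)) := fun u v => rfl
  have hom : ∀ f : A →ₗ[K] A, (∀ u v, f (μ (u ⊗ₜ[K] v)) = μ (f u ⊗ₜ[K] f v)) →
      (∀ z, Δ (f z) = map f f (Δ z)) →
      (∀ z, f (α z) = α (f z)) → (∀ z, f (β z) = β (f z)) →
      (∀ z, f (ψ z) = ψ (f z)) → (∀ z, f (ω z) = ω (f z)) →
      ∀ x y, f (Star18 K A μ Δ α β ψ ω x y)
        = Star18 K A μ Δ α β ψ ω (f x) (f y) := by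
    intro f hfμ hfΔ hfα hfβ hfψ hfω x y
    rw [star_unfold, star_unfold, hfΔ y]
    generalize Δ y = e
    induction e using TensorProduct.induction_on with
    | zero => simp
    | tmul z w =>
        simp only [map_tmul, Fm_apply, Gm_apply, hfμ, hfα, hfβ, hfψ, hfω]
    | add u v hu hv => simp only [map_add, hu, hv]
  refine ⟨?_, ?_, ?_, ?_⟩
  · apply LinearMap.ext
    intro z
    simp only [φ₁, φ₂, LinearMap.comp_apply, hba, hpa, hoa, hpb, hob, hop]
  · intro a b
    exact hom φ₁
      (fun u v => by simp only [φ₁, LinearMap.comp_apply, hαμ, hβμ])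
      hΔφ₁
      (fun z => by simp only [φ₁, LinearMap.comp_apply, hba])
      (fun z => by simp only [φ₁, LinearMap.comp_apply, hba])
      (fun z => by simp only [φ₁, LinearMap.comp_apply, hpa, hpb])
      (fun z => by simp only [φ₁, LinearMap.comp_apply, hoa, hob]) a b
  · intro a b
    exact hom φ₂
      (fun u v => by simp only [φ₂, LinearMap.comp_apply, hαμ, hβμ, hψμ, hωμ])
      hΔφ₂
      (fun z => by simp only [φ₂, LinearMap.comp_apply, hba, hpa, hoa])
      (fun z => by simp only [φ₂, LinearMap.comp_apply, hba, hpb, hob])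
      (fun z => by simp only [φ₂, LinearMap.comp_apply, hpa, hpb, hop])
      (fun z => by simp only [φ₂, LinearMap.comp_apply, hoa, hob, hop]) a b
  · intro a b c
    have hΔμ' : ∀ t : A ⊗[K] A, Δ (μ t)
        = map μ β ((TensorProduct.assoc K A A A).symm (map ω Δ t))
          + map α μ ((TensorProduct.assoc K A A A) (map Δ ψ t))
          + lam • map (α ∘ₗ ω) (β ∘ₗ ψ) t := by
      intro t
      induction t using TensorProduct.induction_on with
      | zero => simp
      | tmul u v => simpa using hcompat u v
      | add u v hu hv => simp only [map_add, smul_add, hu, hv]; abel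
    have hΔF : ∀ y z, Δ (Fm μ α β ψ (φ₁ y) z)
        = XX1 μ Δ α β ψ ω y z + XX2 μ α β ψ y (Δ z) + XX3 α β ψ ω lam y z := by
      intro y z
      rw [Fm_apply, hcompat]
      simp only [XX1_apply, XX2_apply, XX3_apply, φ₁, LinearMap.comp_apply,
        hΔα, hΔβ, hΔψ, hΔω, mm, hba, hpa, hoa, hpb, hob, hop]
    have m1 : ∀ (y : A) (t : A ⊗[K] A),
        map ω Δ (map (Fm μ α β ψ (φ₁ y)) (Gm α β ω) t)
          = map (Fm μ α β ψ (ω (φ₁ y))) (map (Gm α β ω) (Gm α β ω)) (map ω Δ t) := by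
      intro y t
      induction t using TensorProduct.induction_on with
      | zero => simp
      | tmul u v =>
          simp only [map_tmul, Fm_apply, Gm_apply, Gm, φ₁, LinearMap.comp_apply,
            hωμ, hΔα, hΔβ, hΔω, mm, hba, hpa, hoa, hpb, hob, hop]
      | add u v hu hv => simp only [map_add, hu, hv]
    have m2 : ∀ (y : A) (t : A ⊗[K] A),
        map Δ ψ (map (Fm μ α β ψ (φ₁ y)) (Gm α β ω) t)
          = map (XX1 μ Δ α β ψ ω y) (Gm α β ω ∘ₗ ψ) t
            + map (XX2 μ α β ψ y) (Gm α β ω) (map Δ ψ t)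
            + map (XX3 α β ψ ω lam y) (Gm α β ω ∘ₗ ψ) t := by
      intro y t
      induction t using TensorProduct.induction_on with
      | zero => simp
      | tmul u v =>
          simp only [map_tmul, hΔF, add_tmul, LinearMap.comp_apply, Gm_apply,
            hpa, hpb, hob, hop]
      | add u v hu hv => simp only [map_add, hu, hv]; abel
    have hU2 : ∀ x y, μ (map (Fm μ α β ψ (φ₁ (φ₂ x))) (Gm α β ω)
          (map α μ ((TensorProduct.assoc K A A A)
            (map (XX1 μ Δ α β ψ ω y) (Gm α β ω ∘ₗ ψ) (Δ c)))))
        = μ (map (Fm μ α β ψ (μ (map (Fm μ α β ψ (φ₂ x)) (Gm α β ω) (Δ (φ₁ y)))))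
            (Gm α β ω) (Δ (φ₂ c))) := by
      intro x y
      rw [hΔφ₂ c, hΔφ₁ y]
      simp only [XX1, φ₁, φ₂]
      generalize Δ y = e
      generalize Δ c = d
      induction d using TensorProduct.induction_on with
      | zero => simp
      | tmul z w =>
          simp only [map_tmul, LinearMap.comp_apply, TensorProduct.mk_apply,
            LinearMap.flip_apply, LinearEquiv.coe_coe, Fm_apply, Gm_apply]
          induction e using TensorProduct.induction_on with
          | zero => simp
          | tmul r t =>
              simp only [map_tmul, LinearMap.comp_apply, TensorProduct.assoc_tmul,
                TensorProduct.assoc_symm_tmul, TensorProduct.mk_apply,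
                LinearMap.flip_apply, LinearEquiv.coe_coe, Fm_apply, Gm_apply,
                hαμ, hβμ, hψμ, hωμ, hba, hpa, hoa, hpb, hob, hop]
              rw [← hαμ (β (β (β (β (ψ (ψ (ω z))))))) (α (α (α (β (β (β (ψ r))))))),
                ← hαμ (μ (β (β (β (β (ψ (ψ (ω z)))))) ⊗ₜ[K] α (α (α (β (β (β (ψ r))))))))
                  (α (α (α (α (β (β (β (ψ (ω x))))))))),
                hassoc (μ (μ (β (β (β (β (ψ (ψ (ω z)))))) ⊗ₜ[K] α (α (α (β (β (β (ψ r)))))))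
                    ⊗ₜ[K] α (α (α (α (β (β (β (ψ (ω x))))))))))
                  (α (α (α (α (α (β (β (β (ω t))))))))) (α (α (α (α (β (β (ψ (ω (ω w))))))))),
                hassoc (α (β (β (β (β (ψ (ψ (ω z))))))))
                  (μ (α (α (α (β (β (β (ψ r)))))) ⊗ₜ[K] α (α (α (α (β (β (ψ (ω x)))))))))
                  (α (α (α (α (α (β (β (ω t)))))))),
                hassoc (β (β (β (β (ψ (ψ (ω z))))))) (α (α (α (β (β (β (ψ r)))))))
                  (α (α (α (α (β (β (ψ (ω x))))))))]
              simp only [hba, hpa, hoa, hpb, hob, hop]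
          | add e₁ e₂ h₁ h₂ =>
              simp only [map_add, tmul_add, add_tmul, h₁, h₂]
      | add d₁ d₂ h₁ h₂ => simp only [map_add, h₁, h₂]
    have hU3 : ∀ x y (t : A ⊗[K] (A ⊗[K] A)),
        μ (map (Fm μ α β ψ (φ₁ (φ₂ x))) (Gm α β ω)
          (map α μ ((TensorProduct.assoc K A A A)
            (map (XX2 μ α β ψ y) (Gm α β ω) ((TensorProduct.assoc K A A A).symm t)))))
        = μ (map (Fm μ α β ψ (φ₁ (φ₂ y))) (Gm α β ω)
            (map μ β ((TensorProduct.assoc K A A A).symm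
              (map (Fm μ α β ψ (ω (φ₁ x))) (map (Gm α β ω) (Gm α β ω)) t)))) := by
      intro x y t
      induction t using TensorProduct.induction_on with
      | zero => simp
      | tmul z tw =>
          induction tw using TensorProduct.induction_on with
          | zero => simp
          | tmul p q =>
              simp only [map_tmul, LinearMap.comp_apply, TensorProduct.assoc_tmul,
                TensorProduct.assoc_symm_tmul, TensorProduct.mk_apply,
                LinearMap.flip_apply, LinearEquiv.coe_coe, Fm_apply, Gm_apply,
                XX2_apply, φ₁, φ₂,
                hαμ, hβμ, hψμ, hωμ, hba, hpa, hoa, hpb, hob, hop]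
              rw [← hαμ (α (β (β (β (β (ψ (ψ (z)))))))) (α (α (α (α (β (β (β (ψ (ω (x)))))))))),
                ← hαμ (β (β (β (β (ψ (ψ (z))))))) (α (α (α (β (β (β (ψ (ω (x))))))))),
                hassoc (α (μ (β (β (β (β (ψ (ψ (z)))))) ⊗ₜ[K] α (α (α (β (β (β (ψ (ω (x))))))))))) (μ (α (α (β (β (β (ψ (ω (p))))))) ⊗ₜ[K] α (α (α (α (α (β (β (ψ (ω (y))))))))))) (α (α (α (α (β (β (ω (ω (q))))))))),
                hassoc (μ (β (β (β (β (ψ (ψ (z)))))) ⊗ₜ[K] α (α (α (β (β (β (ψ (ω (x)))))))))) (α (α (β (β (β (ψ (ω (p)))))))) (α (α (α (α (α (β (β (ψ (ω (y))))))))))]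
              simp only [hba, hpa, hoa, hpb, hob, hop]
          | add t₁ t₂ h₁ h₂ => simp only [map_add, tmul_add, add_tmul, h₁, h₂]
      | add t₁ t₂ h₁ h₂ => simp only [map_add, h₁, h₂]
    have hU45 : ∀ x y (d : A ⊗[K] A),
        μ (map (Fm μ α β ψ (φ₁ (φ₂ x))) (Gm α β ω)
          (map α μ ((TensorProduct.assoc K A A A)
            (map (XX3 α β ψ ω lam y) (Gm α β ω ∘ₗ ψ) d))))
        = lam • μ (map (Fm μ α β ψ (φ₁ (φ₂ y))) (Gm α β ω)
            (map (α ∘ₗ ω) (β ∘ₗ ψ) (map (Fm μ α β ψ (φ₁ x)) (Gm α β ω) d))) := by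
      intro x y d
      induction d using TensorProduct.induction_on with
      | zero => simp
      | tmul z w =>
          simp only [map_tmul, LinearMap.comp_apply, TensorProduct.assoc_tmul,
            TensorProduct.assoc_symm_tmul, TensorProduct.mk_apply,
            LinearMap.flip_apply, LinearEquiv.coe_coe, Fm_apply, Gm_apply,
            XX3_apply, φ₁, φ₂, smul_tmul', tmul_smul, map_smul, smul_smul,
            hαμ, hβμ, hψμ, hωμ, hba, hpa, hoa, hpb, hob, hop]
          rw [← smul_tmul', map_smul]
          congr 1
          rw [← hαμ (α (β (β (β (β (ψ (ψ (ω (z))))))))) (α (α (α (α (β (β (β (ψ (ω (x)))))))))),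
            hassoc (μ (α (β (β (β (β (ψ (ψ (ω (z)))))))) ⊗ₜ[K] α (α (α (α (β (β (β (ψ (ω (x))))))))))) (α (α (α (α (α (β (β (β (ψ (ω (y))))))))))) (α (α (α (α (β (β (ψ (ω (ω (w))))))))))]
          simp only [hba, hpa, hoa, hpb, hob, hop]
      | add d₁ d₂ h₁ h₂ => simp only [map_add, smul_add, h₁, h₂]
    have rearr : ∀ p q r u v : A, p + (q + r + u) + v - q = p + r + v + u := by
      intros; abel
    have comm4 : ∀ p q u v : A, p + q + u + v = q + p + v + u := by intros; abel
    have main : ∀ x y,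
        Star18 K A μ Δ α β ψ ω (φ₁ (φ₂ x)) (Star18 K A μ Δ α β ψ ω (φ₁ y) c)
          - Star18 K A μ Δ α β ψ ω (Star18 K A μ Δ α β ψ ω (φ₂ x) (φ₁ y)) (φ₂ c)
        = μ (map (Fm μ α β ψ (φ₁ (φ₂ x))) (Gm α β ω)
              (map μ β ((TensorProduct.assoc K A A A).symm
                (map (Fm μ α β ψ (ω (φ₁ y))) (map (Gm α β ω) (Gm α β ω)) (map ω Δ (Δ c))))))
          + μ (map (Fm μ α β ψ (φ₁ (φ₂ y))) (Gm α β ω)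
              (map μ β ((TensorProduct.assoc K A A A).symm
                (map (Fm μ α β ψ (ω (φ₁ x))) (map (Gm α β ω) (Gm α β ω)) (map ω Δ (Δ c))))))
          + lam • μ (map (Fm μ α β ψ (φ₁ (φ₂ x))) (Gm α β ω)
              (map (α ∘ₗ ω) (β ∘ₗ ψ) (map (Fm μ α β ψ (φ₁ y)) (Gm α β ω) (Δ c))))
          + lam • μ (map (Fm μ α β ψ (φ₁ (φ₂ y))) (Gm α β ω)
              (map (α ∘ₗ ω) (β ∘ₗ ψ) (map (Fm μ α β ψ (φ₁ x)) (Gm α β ω) (Δ c)))) := by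
      intro x y
      simp only [star_unfold]
      rw [hΔμ' (map (Fm μ α β ψ (φ₁ y)) (Gm α β ω) (Δ c)), m1 y (Δ c), m2 y (Δ c),
        hco' c]
      simp only [map_add, map_smul]
      rw [hU2 x y, hU3 x y (map ω Δ (Δ c)), hU45 x y (Δ c)]
      exact rearr _ _ _ _ _
    simp only [s]
    rw [main a b, main b a]
    exact comm4 _ _ _ _
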